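/- arXiv:2403.04393 — 14 statements merged into one kernel-verified Lean document; each statement's English description precedes it below -/
import Mathlib

section
/- If Γ is a homomorphism homogeneous oriented graph, then Γ does not contain an induced oriented path of length 2; that is, there are no three vertices x, y, z with x→y, y→z, and no arc between x and z in either direction. -/
def IsOriented {V : Type*} (E : V → V → Prop) : Prop := ∀ x y, E x y → ¬ E y x

def IsLocHom {V : Type*} (E : V → V → Prop) (A : Finset V) (f : V → V) : Prop :=
  ∀ x ∈ A, ∀ y ∈ A, E x y → E (f x) (f y)

def IsHH {V : Type*} (E : V → V → Prop) : Prop :=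
  ∀ (A : Finset V) (f : V → V), IsLocHom E A f →
    ∃ g : V → V, (∀ x y, E x y → E (g x) (g y)) ∧ ∀ x ∈ A, g x = f x

theorem no_induced_path_of_length_two {V : Type*} (E : V → V → Prop)
    (hor : IsOriented E) (hhh : IsHH E) :
    ¬ ∃ x y z : V, E x y ∧ E y z ∧ ¬ E x z ∧ ¬ E z x := by
  classical
  rintro ⟨x, y, z, hxy, hyz, hxz, hzx⟩
  obtain ⟨g, hg, hgA⟩ := hhh {x, z} (fun _ => x) (by
    intro a ha b hb hab
    simp only [Finset.mem_insert, Finset.mem_singleton] at ha hb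
    rcases ha with rfl|rfl <;> rcases hb with rfl|rfl <;>
      first
        | exact absurd hab hxz
        | exact absurd hab hzx
        | exact absurd hab (hor _ _ hab))
  have hgx : g x = x := hgA x (by simp)
  have hgz : g z = x := hgA z (by simp)
  have h1 : E x (g y) := by have := hg x y hxy; rwa [hgx] at this
  have h2 : E (g y) x := by have := hg y z hyz; rwa [hgz] at this
  exact hor _ _ h1 h2
end

section
/- Every acyclic homomorphism homogeneous oriented graph has a transitive arc relation, i.e., its arc relation is a strict partial order. -/
theorem acyclic_HH_transitive {V : Type*} (E : V → V → Prop)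
    (hor : IsOriented E) (hacyc : ∀ x : V, ¬ Relation.TransGen E x x)
    (hhh : IsHH E) : Transitive E := by
  classical
  intro x y z hxy hyz
  by_contra hxz
  obtain ⟨g, hg, hA⟩ := hhh {x, z} (fun _ => y) (by
    intro a ha b hb hab
    exfalso
    simp only [Finset.mem_insert, Finset.mem_singleton] at ha hb
    rcases ha with rfl | rfl <;> rcases hb with rfl | rfl
    · exact hacyc _ (.single hab)
    · exact hxz hab
    · exact hacyc _ (.tail (.tail (.single hab) hxy) hyz)
    · exact hacyc _ (.single hab))
  have h1 : E y (g y) := by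
    have := hg x y hxy
    rwa [hA x (by simp)] at this
  have h2 : E (g y) y := by
    have := hg y z hyz
    rwa [hA z (by simp)] at this
  exact hor _ _ h1 h2
end

section
/- Every induced oriented cycle in a homomorphism homogeneous oriented graph has length exactly 3. -/
theorem induced_cycle_length_three {V : Type*} (E : V → V → Prop)
    (hor : IsOriented E) (hhh : IsHH E) :
    ∀ (n : ℕ), 3 ≤ n → ∀ v : Fin n → V, Function.Injective v →
      (∀ i j : Fin n, E (v i) (v j) ↔ (j : ℕ) = ((i : ℕ) + 1) % n) → n = 3 := by
  classical
  intro n hn v hinj hcyc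
  by_contra hne
  have hn4 : 4 ≤ n := by omega
  set i0 : Fin n := ⟨0, by omega⟩ with hi0
  set i1 : Fin n := ⟨1, by omega⟩ with hi1
  set i2 : Fin n := ⟨2, by omega⟩ with hi2
  have hA : IsLocHom E {v i0, v i2} (fun _ => v i0) := by
    intro x hx y hy hxy
    exfalso
    simp only [Finset.mem_insert, Finset.mem_singleton] at hx hy
    rcases hx with rfl | rfl <;> rcases hy with rfl | rfl <;>
    · have h := (hcyc _ _).1 hxy
      simp only [hi0, hi1, hi2] at h
      rw [Nat.mod_eq_of_lt (by omega)] at h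
      omega
  obtain ⟨g, hg, hgA⟩ := hhh _ _ hA
  have hg0 : g (v i0) = v i0 := hgA _ (by simp)
  have hg2 : g (v i2) = v i0 := hgA _ (by simp)
  have e01 : E (v i0) (v i1) := (hcyc i0 i1).2 (by
    show (1 : ℕ) = (0 + 1) % n
    rw [Nat.mod_eq_of_lt (by omega)])
  have e12 : E (v i1) (v i2) := (hcyc i1 i2).2 (by
    show (2 : ℕ) = (1 + 1) % n
    rw [Nat.mod_eq_of_lt (by omega)])
  have h1 := hg _ _ e01
  have h2 := hg _ _ e12
  rw [hg0] at h1
  rw [hg2] at h2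
  exact hor _ _ h1 h2
end

section
/- A homomorphism homogeneous oriented graph that is a core must be a tournament. -/
theorem HH_core_is_tournament {V : Type*} (E : V → V → Prop)
    (hor : IsOriented E) (hhh : IsHH E)
    (hcore : ∀ g : V → V, (∀ x y, E x y → E (g x) (g y)) →
      Function.Injective g ∧ ∀ x y, E (g x) (g y) → E x y) :
    ∀ x y : V, x ≠ y → E x y ∨ E y x := by
  intro x y hxy
  by_contra hc
  push_neg at hc
  classical
  obtain ⟨g, hg, hgA⟩ := hhh {x, y} (fun _ => x) (by
    intro a ha b hb hab
    simp only [Finset.mem_insert, Finset.mem_singleton] at ha hb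
    rcases ha with rfl | rfl <;> rcases hb with rfl | rfl <;>
      first
      | exact absurd hab (hor _ _ hab)
      | exact absurd hab hc.1
      | exact absurd hab hc.2)
  have hinj := (hcore g hg).1
  have hx : g x = x := hgA x (by simp)
  have hy : g y = x := hgA y (by simp)
  exact hxy (hinj (hx.trans hy.symm))
end

section
/- Let Γ be a weakly connected homomorphism homogeneous oriented graph that is not a tournament. Then Γ contains three vertices u, v, w such that u→w, v→w, and there is no arc between u and v, or three vertices u, v, w such that w→u, w→v, and there is no arc between u and v. -/
theorem three_vertex_configurations {V : Type*} (E : V → V → Prop)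
    (hor : IsOriented E) (hhh : IsHH E)
    (hconn : ∀ x y : V, Relation.ReflTransGen (fun a b => E a b ∨ E b a) x y)
    (hnt : ∃ x y : V, x ≠ y ∧ ¬ E x y ∧ ¬ E y x) :
    (∃ u v w : V, u ≠ v ∧ ¬ E u v ∧ ¬ E v u ∧ E u w ∧ E v w) ∨
    (∃ u v w : V, u ≠ v ∧ ¬ E u v ∧ ¬ E v u ∧ E w u ∧ E w v) := by
  obtain ⟨x, y, hxy, hxy1, hxy2⟩ := hnt
  classical
  have hirr : ∀ a, ¬ E a a := fun a h => hor a a h h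
  -- a directed 2-path with nonadjacent endpoints is impossible
  have dirpath : ∀ a b c : V, E a b → E b c → ¬ E a c → ¬ E c a → False := by
    intro a b c hab hbc hac hca
    have hloc : IsLocHom E {a, c} (fun _ => a) := by
      intro u hu v hv huv
      simp only [Finset.mem_insert, Finset.mem_singleton] at hu hv
      rcases hu with rfl | rfl <;> rcases hv with rfl | rfl <;>
        first
        | exact absurd huv (hirr _)
        | exact absurd huv hac
        | exact absurd huv hca
    obtain ⟨g, hg, hgA⟩ := hhh {a, c} (fun _ => a) hloc
    have ha : g a = a := hgA a (by simp)
    have hc : g c = a := hgA c (by simp)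
    have h1 : E a (g b) := ha ▸ hg a b hab
    have h2 : E (g b) a := hc ▸ hg b c hbc
    exact hor _ _ h1 h2
  have main : ∀ x y : V, Relation.ReflTransGen (fun a b => E a b ∨ E b a) x y →
      ¬ E x y → ¬ E y x → x ≠ y →
      (∃ u v w : V, u ≠ v ∧ ¬ E u v ∧ ¬ E v u ∧ E u w ∧ E v w) ∨
      (∃ u v w : V, u ≠ v ∧ ¬ E u v ∧ ¬ E v u ∧ E w u ∧ E w v) := by
    intro x y h
    induction h using Relation.ReflTransGen.head_induction_on with
    | refl => intro _ _ hne; exact absurd rfl hne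
    | @head x' z hxz hzy ih =>
      intro h1 h2 hne
      by_cases hzy' : z = y
      · subst hzy'
        rcases hxz with h | h
        · exact absurd h h1
        · exact absurd h h2
      by_cases hE1 : E z y
      · rcases hxz with h | h
        · exact absurd (dirpath x' z y h hE1 h1 h2) not_false
        · exact Or.inr ⟨x', y, z, hne, h1, h2, h, hE1⟩
      by_cases hE2 : E y z
      · rcases hxz with h | h
        · exact Or.inl ⟨x', y, z, hne, h1, h2, h, hE2⟩
        · exact absurd (dirpath y z x' hE2 h h2 h1) not_false
      · exact ih hE1 hE2 hzy'
  exact main x y (hconn x y) hxy1 hxy2 hxy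
end

section
/- If Γ is a weakly connected homomorphism homogeneous oriented graph, then the underlying undirected graph of Γ has diameter at most 2: for any two distinct vertices x, y with no arc between them, there exists a vertex z adjacent (in some direction) to both. -/
def SemiWalk {V : Type*} (E : V → V → Prop) : ℕ → V → V → Prop
  | 0, x, y => x = y
  | n+1, x, y => ∃ a, (E x a ∨ E a x) ∧ SemiWalk E n a y

lemma semiWalk_snoc {V : Type*} {E : V → V → Prop} {n : ℕ} {x b y : V}
    (h : SemiWalk E n x b) (hs : E b y ∨ E y b) : SemiWalk E (n+1) x y := by
  induction n generalizing x with
  | zero => cases h; exact ⟨y, hs, rfl⟩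
  | succ n ih => obtain ⟨a, ha, hw⟩ := h; exact ⟨a, ha, ih hw⟩

lemma exists_semiWalk {V : Type*} {E : V → V → Prop} {x y : V}
    (h : Relation.ReflTransGen (fun a b => E a b ∨ E b a) x y) :
    ∃ n, SemiWalk E n x y := by
  induction h with
  | refl => exact ⟨0, rfl⟩
  | tail hab hb ih => obtain ⟨n, hw⟩ := ih; exact ⟨n+1, semiWalk_snoc hw hb⟩

lemma semiWalk_map {V : Type*} {E : V → V → Prop} {g : V → V}
    (hg : ∀ u v, E u v → E (g u) (g v)) :
    ∀ n (x y : V), SemiWalk E n x y → SemiWalk E n (g x) (g y) := by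
  intro n
  induction n with
  | zero => intro x y h; cases h; rfl
  | succ n ih =>
      rintro x y ⟨a, ha, hw⟩
      exact ⟨g a, ha.imp (hg _ _) (hg _ _), ih _ _ hw⟩

theorem HH_diameter_le_two {V : Type*} (E : V → V → Prop)
    (hor : IsOriented E) (hhh : IsHH E)
    (hconn : ∀ x y : V, Relation.ReflTransGen (fun a b => E a b ∨ E b a) x y) :
    ∀ x y : V, x ≠ y → ¬ E x y → ¬ E y x →
      ∃ z : V, (E x z ∨ E z x) ∧ (E y z ∨ E z y) := by
  classical
  intro x y hxy hxy1 hxy2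
  obtain ⟨n, hw⟩ := exists_semiWalk (E := E) (hconn x y)
  induction n using Nat.strong_induction_on with
  | _ n IH =>
    match n, hw with
    | 0, hw => exact absurd hw hxy
    | (m+1), ⟨a, haxa, hw⟩ =>
      by_cases hay : a = y
      · subst hay
        exact absurd haxa (by simp [hxy1, hxy2])
      by_cases hadj : E a y ∨ E y a
      · exact ⟨a, haxa, hadj.symm.imp id id⟩
      push_neg at hadj
      -- a ≠ y and a not adjacent to y, so m ≥ 1
      match m, hw with
      | 0, hw => exact absurd hw hay
      | (k+1), ⟨b, hab, hw⟩ =>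
        -- local hom on {a, y}: a ↦ x, y ↦ y (vacuously a hom)
        have hloc : IsLocHom E ({a, y} : Finset V) (fun v => if v = a then x else v) := by
          intro u hu v hv huv
          simp only [Finset.mem_insert, Finset.mem_singleton] at hu hv
          rcases hu with rfl | rfl <;> rcases hv with rfl | rfl
          · exact absurd huv (hor _ _ huv)
          · exact absurd huv hadj.1
          · exact absurd huv hadj.2
          · exact absurd huv (hor _ _ huv)
        obtain ⟨g, hg, hgA⟩ := hhh _ _ hloc
        have hga : g a = x := by simpa using hgA a (by simp)
        have hgy : g y = y := by
          have := hgA y (by simp)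
          simpa [hay] using this.symm ▸ (by simp [Ne.symm, hay] : (if y = a then x else y) = y)
        -- map the walk b → y by g; get walk g b → y of length k
        have hw' : SemiWalk E k (g b) y := hgy ▸ semiWalk_map hg k b y hw
        -- step x — g b
        have hstep : E x (g b) ∨ E (g b) x := by
          rcases hab with h | h
          · exact Or.inl (hga ▸ hg a b h)
          · exact Or.inr (hga ▸ hg b a h)
        exact IH (k+1) (by omega) ⟨g b, hstep, hw'⟩
end

section
/- Let Γ be a homomorphism homogeneous oriented graph containing an induced directed 3-cycle, and suppose the non-adjacency relation ≁ is an equivalence relation. Then for any two distinct equivalence classes A and B of ≁, either every vertex of A has an arc to every vertex of B, or every vertex of B has an arc to every vertex of A. -/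
theorem noP2 {V : Type*} (E : V → V → Prop)
    (hor : IsOriented E) (hhh : IsHH E) :
    ∀ u v w : V, E u v → E v w → E u w ∨ E w u := by
  classical
  intro u v w huv hvw
  by_contra h
  push_neg at h
  obtain ⟨h1, h2⟩ := h
  have hloc : IsLocHom E {u, w} (fun _ => u) := by
    intro x hx y hy hxy
    exfalso
    simp only [Finset.mem_insert, Finset.mem_singleton] at hx hy
    rcases hx with rfl | rfl <;> rcases hy with rfl | rfl
    · exact hor _ _ hxy hxy
    · exact h1 hxy
    · exact h2 hxy
    · exact hor _ _ hxy hxy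
  obtain ⟨g, hg, hgA⟩ := hhh {u, w} (fun _ => u) hloc
  have e1 := hg u v huv
  have e2 := hg v w hvw
  rw [hgA u (by simp)] at e1
  rw [hgA w (by simp)] at e2
  exact hor _ _ e1 e2

theorem half {V : Type*} (E : V → V → Prop)
    (hor : IsOriented E) (hhh : IsHH E)
    (heq : Equivalence (fun x y : V => ¬ E x y ∧ ¬ E y x))
    (a b : V) (hab : E a b) :
    ∀ x y : V, (¬ E a x ∧ ¬ E x a) → (¬ E b y ∧ ¬ E y b) → E x y := by
  intro x y hax hby
  -- first: E a y
  have hay : E a y := by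
    by_contra hay
    have hya : E y a := by
      by_contra hya
      -- then a ∼ y, so a ∼ b by transitivity with b ∼ y, contradiction with E a b
      have : ¬ E a b ∧ ¬ E b a := heq.trans ⟨hay, hya⟩ (heq.symm hby)
      exact this.1 hab
    rcases noP2 E hor hhh y a b hya hab with h | h
    · exact hby.2 h
    · exact hby.1 h
  -- now E x y
  by_contra hxy
  have hyx : E y x := by
    by_contra hyx
    -- x ∼ y, so a ∼ y by transitivity, contradiction with E a y
    have : ¬ E a y ∧ ¬ E y a := heq.trans hax ⟨hxy, hyx⟩
    exact this.1 hay
  rcases noP2 E hor hhh a y x hay hyx with h | h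
  · exact hax.1 h
  · exact hax.2 h

theorem classes_totally_ordered {V : Type*} (E : V → V → Prop)
    (hor : IsOriented E) (hhh : IsHH E)
    (hC3 : ∃ a b c : V, a ≠ b ∧ b ≠ c ∧ a ≠ c ∧ E a b ∧ E b c ∧ E c a)
    (heq : Equivalence (fun x y : V => ¬ E x y ∧ ¬ E y x)) :
    ∀ a b : V, ¬ (¬ E a b ∧ ¬ E b a) →
      (∀ x y : V, (¬ E a x ∧ ¬ E x a) → (¬ E b y ∧ ¬ E y b) → E x y) ∨
      (∀ x y : V, (¬ E a x ∧ ¬ E x a) → (¬ E b y ∧ ¬ E y b) → E y x) := by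
  intro a b hne
  by_cases hab : E a b
  · exact Or.inl (half E hor hhh heq a b hab)
  · have hba : E b a := by tauto
    exact Or.inr fun x y hax hby => half E hor hhh heq b a hba y x hby hax
end

section
/- If an oriented graph Γ contains four vertices a, b, c, d with arcs a→b, b→c, c→d, d→a, d→b, a→c, then the second direct power Γ² contains an induced directed path of length 2, and hence Γ² is not homomorphism homogeneous; consequently Γ is not polymorphism homogeneous. -/
def IsPH {V : Type*} (E : V → V → Prop) : Prop :=
  ∀ n : ℕ, IsHH (fun p q : Fin n → V => ∀ i, E (p i) (q i))

theorem config_K_not_PH {V : Type*} (E : V → V → Prop)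
    (hor : IsOriented E)
    (hK : ∃ a b c d : V, a ≠ b ∧ a ≠ c ∧ a ≠ d ∧ b ≠ c ∧ b ≠ d ∧ c ≠ d ∧
      E a b ∧ E b c ∧ E c d ∧ E d a ∧ E d b ∧ E a c) :
    (∃ x y z : V × V,
        (E x.1 y.1 ∧ E x.2 y.2) ∧ (E y.1 z.1 ∧ E y.2 z.2) ∧
        ¬ (E x.1 z.1 ∧ E x.2 z.2) ∧ ¬ (E z.1 x.1 ∧ E z.2 x.2)) ∧
    ¬ IsHH (fun p q : V × V => E p.1 q.1 ∧ E p.2 q.2) ∧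
    ¬ IsPH E := by
  classical
  obtain ⟨a, b, c, d, hab, hac, had, hbc, hbd, hcd,
    eab, ebc, ecd, eda, edb, eac⟩ := hK
  have hnca : ¬ E c a := hor a c eac
  have hirr : ∀ v, ¬ E v v := fun v h => hor v v h h
  refine ⟨⟨(a, c), (b, d), (c, a), ⟨eab, ecd⟩, ⟨ebc, eda⟩,
      fun h => hnca h.2, fun h => hnca h.1⟩, ?_, ?_⟩
  · -- not HH on pairs
    intro hHH
    set X : V × V := (a, c)
    set Y : V × V := (b, d)
    set Z : V × V := (c, a)
    have hXZ : X ≠ Z := by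
      intro h; exact hac (congrArg Prod.fst h)
    have hloc : IsLocHom (fun p q : V × V => E p.1 q.1 ∧ E p.2 q.2)
        ({X, Z} : Finset (V × V)) (fun _ => Z) := by
      intro x hx y hy hxy
      simp only [Finset.mem_insert, Finset.mem_singleton] at hx hy
      rcases hx with rfl | rfl <;> rcases hy with rfl | rfl
      · exact absurd hxy.1 (hirr a)
      · exact absurd hxy.2 hnca
      · exact absurd hxy.1 hnca
      · exact absurd hxy.1 (hirr c)
    obtain ⟨g, hg, hga⟩ := hHH _ _ hloc
    have hgX : g X = Z := hga X (by simp)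
    have hgZ : g Z = Z := hga Z (by simp)
    have h1 := hg X Y ⟨eab, ecd⟩
    have h2 := hg Y Z ⟨ebc, eda⟩
    rw [hgX] at h1
    rw [hgZ] at h2
    exact hor _ _ h1.1 h2.1
  · -- not PH
    intro hPH
    have hHH := hPH 2
    set X : Fin 2 → V := ![a, c]
    set Y : Fin 2 → V := ![b, d]
    set Z : Fin 2 → V := ![c, a]
    have hX0 : X 0 = a := rfl
    have hX1 : X 1 = c := rfl
    have hZ0 : Z 0 = c := rfl
    have hZ1 : Z 1 = a := rfl
    have hXZ : X ≠ Z := by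
      intro h; exact hac (congrFun h 0)
    have hloc : IsLocHom (fun p q : Fin 2 → V => ∀ i, E (p i) (q i))
        ({X, Z} : Finset (Fin 2 → V)) (fun _ => Z) := by
      intro x hx y hy hxy
      simp only [Finset.mem_insert, Finset.mem_singleton] at hx hy
      rcases hx with rfl | rfl <;> rcases hy with rfl | rfl
      · exact absurd (hxy 0) (hirr a)
      · exact absurd (hxy 1) hnca
      · exact absurd (hxy 0) hnca
      · exact absurd (hxy 0) (hirr c)
    obtain ⟨g, hg, hga⟩ := hHH _ _ hloc
    have hgX : g X = Z := hga X (by simp)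
    have hgZ : g Z = Z := hga Z (by simp)
    have h1 := hg X Y (fun i => by fin_cases i <;> assumption)
    have h2 := hg Y Z (fun i => by fin_cases i <;> assumption)
    rw [hgX] at h1
    rw [hgZ] at h2
    exact hor _ _ (h1 0) (h2 0)
end

section
/- If Γ is a disconnected homomorphism homogeneous oriented graph, then every weakly connected component of Γ is a tournament. -/
/-! An endomorphism preserves weak connectivity, and homomorphism homogeneity lets us send a
non-adjacent pair `x, y` of one component onto any pair `p, q` whatsoever; taking `p, q` in
different components gives a contradiction. -/

section

variable {V : Type*} {E : V → V → Prop}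

theorem IsOriented.irrefl (hor : IsOriented E) (x : V) : ¬ E x x :=
  fun hx => hor x x hx hx

theorem isLocHom_pair_of_not_adj [DecidableEq V] (hirr : ∀ z, ¬ E z z) {x y : V}
    (hxy : ¬ E x y) (hyx : ¬ E y x) (f : V → V) : IsLocHom E {x, y} f := by
  intro a ha b hb hab
  simp only [Finset.mem_insert, Finset.mem_singleton] at ha hb
  rcases ha with rfl | rfl <;> rcases hb with rfl | rfl
  exacts [(hirr _ hab).elim, (hxy hab).elim, (hyx hab).elim, (hirr _ hab).elim]

theorem IsHH.exists_endomorphism_of_not_adj (hhh : IsHH E) (hirr : ∀ z, ¬ E z z) {x y : V}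
    (hne : x ≠ y) (hxy : ¬ E x y) (hyx : ¬ E y x) (p q : V) :
    ∃ g : V → V, (∀ a b, E a b → E (g a) (g b)) ∧ g x = p ∧ g y = q := by
  classical
  let f : V → V := fun z => if z = x then p else q
  obtain ⟨g, hg, hgf⟩ := hhh {x, y} f (isLocHom_pair_of_not_adj hirr hxy hyx f)
  refine ⟨g, hg, ?_, ?_⟩
  · rw [hgf x (by simp)]
    simp [f]
  · rw [hgf y (by simp)]
    simp [f, hne.symm]

theorem reflTransGen_weakAdj_map {g : V → V} (hg : ∀ a b, E a b → E (g a) (g b)) {x y : V}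
    (hxy : Relation.ReflTransGen (fun a b => E a b ∨ E b a) x y) :
    Relation.ReflTransGen (fun a b => E a b ∨ E b a) (g x) (g y) :=
  hxy.lift g fun a b h => h.imp (hg a b) (hg b a)

end

theorem components_are_tournaments {V : Type*} (E : V → V → Prop)
    (hor : IsOriented E) (hhh : IsHH E)
    (hdisc : ∃ x y : V, ¬ Relation.ReflTransGen (fun a b => E a b ∨ E b a) x y) :
    ∀ x y : V, Relation.ReflTransGen (fun a b => E a b ∨ E b a) x y →
      x ≠ y → E x y ∨ E y x := by
  obtain ⟨p, q, hpq⟩ := hdisc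
  intro x y hxy hne
  by_contra! hnadj
  obtain ⟨g, hg, rfl, rfl⟩ :=
    hhh.exists_endomorphism_of_not_adj hor.irrefl hne hnadj.1 hnadj.2 p q
  exact hpq (reflTransGen_weakAdj_map hg hxy)
end

section
/- Every weakly connected component of a homomorphism homogeneous oriented graph is itself homomorphism homogeneous (as an induced subgraph). -/
/-!
Extend a local homomorphism `f` of the component `C` by the identity off `C`; homomorphism
homogeneity of the whole graph gives an endomorphism `g` agreeing with `f` on its finite domain.
Endomorphisms preserve semi-walks, so `g` maps `C` into the component of `g a = f a` for any `a`
in the domain, which is `C` itself. (An empty domain is handled by the identity.)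
-/

open Relation

section
variable {V : Type*} (E : V → V → Prop)

theorem reflTransGen_symmGen_map_of_hom {g : V → V} (hg : ∀ x y, E x y → E (g x) (g y))
    {x y : V} (h : ReflTransGen (SymmGen E) x y) : ReflTransGen (SymmGen E) (g x) (g y) :=
  h.lift g fun _ _ hst => hst.elim (fun h => .inl (hg _ _ h)) (fun h => .inr (hg _ _ h))

theorem reflTransGen_symmGen_apply_of_hom {g : V → V} (hg : ∀ x y, E x y → E (g x) (g y))
    {v a y : V} (ha : ReflTransGen (SymmGen E) v a) (hga : ReflTransGen (SymmGen E) v (g a))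
    (hy : ReflTransGen (SymmGen E) v y) : ReflTransGen (SymmGen E) v (g y) :=
  hga.trans <| reflTransGen_symmGen_map_of_hom E hg <| (Std.Symm.symm _ _ ha).trans hy

theorem IsHH.exists_hom_extending_subtype {P : V → Prop} (hhh : IsHH E)
    (A : Finset (Subtype P)) (f : Subtype P → Subtype P)
    (hf : IsLocHom (fun a b : Subtype P => E a.1 b.1) A f) :
    ∃ g : V → V, (∀ x y, E x y → E (g x) (g y)) ∧ ∀ p ∈ A, g p.1 = (f p).1 := by
  set f' : V → V := Function.extend Subtype.val (fun p => (f p).1) id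
  have hf' : ∀ p : Subtype P, f' p.1 = (f p).1 := Subtype.val_injective.extend_apply _ _
  have hloc : IsLocHom E (A.map (Function.Embedding.subtype P)) f' := by
    simp only [IsLocHom, Finset.mem_map, Function.Embedding.subtype_apply]
    rintro _ ⟨p, hp, rfl⟩ _ ⟨q, hq, rfl⟩ hpq
    rw [hf', hf']
    exact hf p hp q hq hpq
  obtain ⟨g, hg, hgA⟩ := hhh _ f' hloc
  exact ⟨g, hg, fun p hp => (hgA p.1 (Finset.mem_map_of_mem _ hp)).trans (hf' p)⟩

end

theorem components_HH_general {V : Type*} (E : V → V → Prop)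
    (hhh : IsHH E) :
    ∀ v : V,
      IsHH (fun a b : {y : V // Relation.ReflTransGen (fun s t => E s t ∨ E t s) v y} =>
        E a.1 b.1) := by
  intro v A f hf
  rcases A.eq_empty_or_nonempty with rfl | ⟨a, ha⟩
  · exact ⟨id, fun _ _ h => h, by simp⟩
  obtain ⟨g, hg, hgA⟩ := hhh.exists_hom_extending_subtype E A f hf
  have hga : ReflTransGen (SymmGen E) v (g a.1) := hgA a ha ▸ (f a).2
  exact ⟨fun p => ⟨g p.1, reflTransGen_symmGen_apply_of_hom E hg a.2 hga p.2⟩,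
    fun _ _ h => hg _ _ h, fun p hp => Subtype.ext (hgA p hp)⟩

theorem components_HH {V : Type*} (E : V → V → Prop)
    (hor : IsOriented E) (hhh : IsHH E) :
    ∀ v : V,
      IsHH (fun a b : {y : V // Relation.ReflTransGen (fun s t => E s t ∨ E t s) v y} =>
        E a.1 b.1) :=
  components_HH_general E hhh
end

section
/- Let Γ be an oriented graph all of whose weakly connected components are isomorphic to one fixed homogeneous tournament T. Then Γ is homomorphism homogeneous. -/
def SameComponent {V : Type*} (E : V → V → Prop) : V → V → Prop :=
  Relation.ReflTransGen (fun a b => E a b ∨ E b a)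

namespace SameComponent

variable {V : Type*} {E : V → V → Prop} {x y z : V}

theorem refl (x : V) : SameComponent E x x := Relation.ReflTransGen.refl

theorem of_rel (h : E x y) : SameComponent E x y := Relation.ReflTransGen.single (Or.inl h)

theorem of_rel' (h : E y x) : SameComponent E x y := Relation.ReflTransGen.single (Or.inr h)

theorem symm (h : SameComponent E x y) : SameComponent E y x :=
  haveI : Std.Symm fun a b : V => E a b ∨ E b a := ⟨fun _ _ hab => hab.symm⟩
  Relation.ReflTransGen.stdSymm.symm _ _ h

theorem trans (hxy : SameComponent E x y) (hyz : SameComponent E y z) : SameComponent E x z :=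
  Relation.ReflTransGen.trans hxy hyz

def componentSetoid (E : V → V → Prop) : Setoid V := ⟨SameComponent E, ⟨refl, symm, trans⟩⟩

end SameComponent

section Tournament

variable {α : Type*} {r : α → α → Prop} {B : Finset α} {F : α → α}

theorem IsOriented.irrefl_s12 (hr : IsOriented r) (x : α) : ¬ r x x := fun h => hr x x h h

theorem IsLocHom.injOn_of_tournament (hr : IsOriented r)
    (htour : ∀ s t, s ≠ t → r s t ∨ r t s) (hF : IsLocHom r B F) : Set.InjOn F B := by
  intro s hs t ht hst
  by_contra hne
  rcases htour s t hne with h | h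
  · exact hr.irrefl_s12 (F t) (hst ▸ hF s hs t ht h)
  · exact hr.irrefl_s12 (F s) (hst ▸ hF t ht s hs h)

theorem IsLocHom.rel_iff_of_tournament (hr : IsOriented r)
    (htour : ∀ s t, s ≠ t → r s t ∨ r t s) (hF : IsLocHom r B F) :
    ∀ s ∈ B, ∀ t ∈ B, r s t ↔ r (F s) (F t) := by
  refine fun s hs t ht => ⟨hF s hs t ht, fun h => ?_⟩
  have hne : s ≠ t := by
    rintro rfl
    exact hr.irrefl_s12 _ h
  exact (htour s t hne).resolve_right fun h' => hr _ _ h (hF t ht s hs h')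

end Tournament

section Charts

variable {V T : Type*} {E : V → V → Prop} {ET : T → T → Prop} {φ : V → T → V}

theorem eq_or_rel_or_rel_of_sameComponent (htour : ∀ s t : T, s ≠ t → ET s t ∨ ET t s)
    (hφsurj : ∀ v w, SameComponent E v w → ∃ t, φ v t = w)
    (hφ : ∀ v s t, ET s t ↔ E (φ v s) (φ v t)) {x y : V} (hxy : SameComponent E x y) :
    x = y ∨ E x y ∨ E y x := by
  obtain ⟨s, hs⟩ := hφsurj x x (.refl x)
  obtain ⟨t, ht⟩ := hφsurj x y hxy
  rw [← hs, ← ht]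
  by_cases hst : s = t
  · exact .inl (congrArg _ hst)
  · exact .inr ((htour s t hst).imp (hφ x s t).mp (hφ x t s).mp)

theorem IsLocHom.sameComponent_map (htour : ∀ s t : T, s ≠ t → ET s t ∨ ET t s)
    (hφsurj : ∀ v w, SameComponent E v w → ∃ t, φ v t = w)
    (hφ : ∀ v s t, ET s t ↔ E (φ v s) (φ v t)) {A : Finset V} {f : V → V} (hf : IsLocHom E A f)
    {x y : V} (hx : x ∈ A) (hy : y ∈ A) (hxy : SameComponent E x y) :
    SameComponent E (f x) (f y) := by
  rcases eq_or_rel_or_rel_of_sameComponent htour hφsurj hφ hxy with rfl | h | h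
  · exact .refl _
  · exact .of_rel (hf x hx y hy h)
  · exact .of_rel' (hf y hy x hx h)

theorem exists_extension_on_component_of_mem (horT : IsOriented ET)
    (htour : ∀ s t : T, s ≠ t → ET s t ∨ ET t s)
    (hhom : ∀ (A : Finset T) (f : T → T), Set.InjOn f A →
      (∀ x ∈ A, ∀ y ∈ A, (ET x y ↔ ET (f x) (f y))) →
      ∃ g : T ≃ T, (∀ x y, ET x y ↔ ET (g x) (g y)) ∧ ∀ x ∈ A, g x = f x)
    (hφinj : ∀ v, Function.Injective (φ v)) (hφconn : ∀ v t, SameComponent E v (φ v t))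
    (hφsurj : ∀ v w, SameComponent E v w → ∃ t, φ v t = w)
    (hφ : ∀ v s t, ET s t ↔ E (φ v s) (φ v t)) {A : Finset V} {f : V → V} (hf : IsLocHom E A f)
    {a : V} (ha : a ∈ A) :
    ∃ g : V → V, (∀ x y, SameComponent E a x → E x y → E (g x) (g y)) ∧
      ∀ x ∈ A, SameComponent E a x → g x = f x := by
  have : Nonempty T := let ⟨t, _⟩ := hφsurj a a (.refl a); ⟨t⟩
  have apply_invFun : ∀ v w, SameComponent E v w → φ v (Function.invFun (φ v) w) = w :=
    fun v w h => Function.invFun_eq (hφsurj v w h)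
  set B := A.preimage (φ a) (hφinj a).injOn
  set F : T → T := fun t => Function.invFun (φ (f a)) (f (φ a t))
  have hF : ∀ t ∈ B, φ (f a) (F t) = f (φ a t) := fun t ht =>
    apply_invFun _ _ (hf.sameComponent_map htour hφsurj hφ ha (Finset.mem_preimage.mp ht)
      (hφconn a t))
  have hFhom : IsLocHom ET B F := fun s hs t ht hst => by
    rw [hφ (f a), hF s hs, hF t ht]
    exact hf _ (Finset.mem_preimage.mp hs) _ (Finset.mem_preimage.mp ht) ((hφ a s t).mp hst)
  obtain ⟨σ, hσ, hσF⟩ := hhom B F (hFhom.injOn_of_tournament horT htour)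
    (hFhom.rel_iff_of_tournament horT htour)
  refine ⟨fun x => φ (f a) (σ (Function.invFun (φ a) x)), fun x y hx hxy => ?_, fun x hx hax => ?_⟩
  · rw [← hφ, ← hσ, hφ a, apply_invFun a x hx, apply_invFun a y (hx.trans (.of_rel hxy))]
    exact hxy
  · have hB : Function.invFun (φ a) x ∈ B := by
      rw [Finset.mem_preimage, apply_invFun a x hax]
      exact hx
    simp only [hσF _ hB, hF _ hB, apply_invFun a x hax]

end Charts

theorem exists_extension_of_forall_component {V : Type*} {E : V → V → Prop} {s : Set V}
    {f : V → V} (h : ∀ v, ∃ g : V → V, (∀ x y, SameComponent E v x → E x y → E (g x) (g y)) ∧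
      ∀ x ∈ s, SameComponent E v x → g x = f x) :
    ∃ g : V → V, (∀ x y, E x y → E (g x) (g y)) ∧ ∀ x ∈ s, g x = f x := by
  choose g hg_hom hg_eq using h
  set rep : V → V := fun x => (Quotient.mk (SameComponent.componentSetoid E) x).out
  have rep_spec : ∀ x, SameComponent E (rep x) x := fun x =>
    Quotient.mk_out (s := SameComponent.componentSetoid E) x
  have rep_eq : ∀ x y, E x y → rep x = rep y := fun x y hxy =>
    congrArg Quotient.out (Quotient.sound (SameComponent.of_rel hxy))
  refine ⟨fun x => g (rep x) x, fun x y hxy => ?_, fun x hx => hg_eq _ x hx (rep_spec x)⟩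
  show E (g (rep x) x) (g (rep y) y)
  rw [← rep_eq x y hxy]
  exact hg_hom _ x y (rep_spec x) hxy

theorem union_of_homogeneous_tournament_HH_general {V T : Type*}
    (E : V → V → Prop) (ET : T → T → Prop)
    (horT : IsOriented ET)
    (htour : ∀ s t : T, s ≠ t → ET s t ∨ ET t s)
    (hhom : ∀ (A : Finset T) (f : T → T), Set.InjOn f A →
      (∀ x ∈ A, ∀ y ∈ A, (ET x y ↔ ET (f x) (f y))) →
      ∃ g : T ≃ T, (∀ x y, ET x y ↔ ET (g x) (g y)) ∧ ∀ x ∈ A, g x = f x)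
    (hcomp : ∀ v : V, ∃ φ : T → V,
      Function.Injective φ ∧
      (∀ t : T, Relation.ReflTransGen (fun a b => E a b ∨ E b a) v (φ t)) ∧
      (∀ w : V, Relation.ReflTransGen (fun a b => E a b ∨ E b a) v w → ∃ t, φ t = w) ∧
      (∀ s t : T, ET s t ↔ E (φ s) (φ t))) :
    IsHH E := by
  intro A f hf
  choose φ hφinj hφconn hφsurj hφ using hcomp
  refine exists_extension_of_forall_component (s := (A : Set V)) fun v => ?_
  by_cases hv : ∃ a ∈ A, SameComponent E a v
  · obtain ⟨a, ha, hav⟩ := hv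
    obtain ⟨g, hg_hom, hg_eq⟩ := exists_extension_on_component_of_mem horT htour hhom hφinj
      hφconn hφsurj hφ hf ha
    exact ⟨g, fun x y hvx => hg_hom x y (hav.trans hvx),
      fun x hx hvx => hg_eq x hx (hav.trans hvx)⟩
  · exact ⟨id, fun x y _ hxy => hxy, fun x hx hvx => absurd ⟨x, hx, hvx.symm⟩ hv⟩

theorem union_of_homogeneous_tournament_HH {V T : Type*}
    (E : V → V → Prop) (ET : T → T → Prop)
    (horV : IsOriented E) (horT : IsOriented ET)
    (htour : ∀ s t : T, s ≠ t → ET s t ∨ ET t s)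
    (hhom : ∀ (A : Finset T) (f : T → T), Set.InjOn f A →
      (∀ x ∈ A, ∀ y ∈ A, (ET x y ↔ ET (f x) (f y))) →
      ∃ g : T ≃ T, (∀ x y, ET x y ↔ ET (g x) (g y)) ∧ ∀ x ∈ A, g x = f x)
    (hcomp : ∀ v : V, ∃ φ : T → V,
      Function.Injective φ ∧
      (∀ t : T, Relation.ReflTransGen (fun a b => E a b ∨ E b a) v (φ t)) ∧
      (∀ w : V, Relation.ReflTransGen (fun a b => E a b ∨ E b a) v w → ∃ t, φ t = w) ∧
      (∀ s t : T, ET s t ↔ E (φ s) (φ t))) :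
    IsHH E :=
  union_of_homogeneous_tournament_HH_general E ET horT htour hhom hcomp
end

section
/- For k ≥ 2, the disjoint union of k copies of the rational linear order (ℚ,<), viewed as an oriented graph, is not polymorphism homogeneous: its second power is not homomorphism homogeneous. -/
theorem copies_of_Q_not_PH (k : ℕ) (hk : 2 ≤ k) :
    ¬ IsHH (fun p q : (Fin k × ℚ) × (Fin k × ℚ) =>
        (p.1.1 = q.1.1 ∧ p.1.2 < q.1.2) ∧ (p.2.1 = q.2.1 ∧ p.2.2 < q.2.2)) ∧
    ¬ IsPH (fun p q : Fin k × ℚ => p.1 = q.1 ∧ p.2 < q.2) := by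
  have h01 : (⟨0, by omega⟩ : Fin k) ≠ ⟨1, by omega⟩ := by
    intro h
    exact absurd (congrArg Fin.val h) (by simp)
  set c0 : Fin k := ⟨0, by omega⟩ with hc0
  set c1 : Fin k := ⟨1, by omega⟩ with hc1
  constructor
  · intro h
    set x : (Fin k × ℚ) × (Fin k × ℚ) := ((c0, 0), (c0, 1)) with hx
    set y : (Fin k × ℚ) × (Fin k × ℚ) := ((c0, 1), (c0, 0)) with hy
    set p : (Fin k × ℚ) × (Fin k × ℚ) := ((c0, 0), (c1, 0)) with hp
    set q : (Fin k × ℚ) × (Fin k × ℚ) := ((c1, 0), (c0, 0)) with hq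
    have hxy : x ≠ y := by
      intro h
      have := congrArg (fun v => v.1.2) h
      norm_num [hx, hy] at this
    have hloc : ∀ a ∈ ({x, y} : Finset _), ∀ b ∈ ({x, y} : Finset _),
        ((a.1.1 = b.1.1 ∧ a.1.2 < b.1.2) ∧ (a.2.1 = b.2.1 ∧ a.2.2 < b.2.2)) →
        False := by
      intro a ha b hb hab
      simp only [Finset.mem_insert, Finset.mem_singleton] at ha hb
      rcases ha with rfl | rfl <;> rcases hb with rfl | rfl <;>
        · obtain ⟨⟨-, h1⟩, ⟨-, h2⟩⟩ := hab
          simp only [hx, hy] at h1 h2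
          linarith
    obtain ⟨g, hg, hgA⟩ := h {x, y} (fun v => if v = x then p else if v = y then q else v)
      (fun a ha b hb hab => absurd hab (fun hab => hloc a ha b hb hab))
    have hgx : g x = p := by simpa using hgA x (by simp)
    have hgy : g y = q := by
      have := hgA y (by simp)
      simpa [hxy.symm] using this
    set z : (Fin k × ℚ) × (Fin k × ℚ) := ((c0, 2), (c0, 2)) with hz
    have hxz := hg x z (by norm_num [hx, hz])
    have hyz := hg y z (by norm_num [hy, hz])
    rw [hgx] at hxz
    rw [hgy] at hyz
    exact h01 (hxz.1.1.trans hyz.1.1.symm)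
  · intro h
    set x : Fin 2 → Fin k × ℚ := ![(c0, 0), (c0, 1)] with hx
    set y : Fin 2 → Fin k × ℚ := ![(c0, 1), (c0, 0)] with hy
    set p : Fin 2 → Fin k × ℚ := ![(c0, 0), (c1, 0)] with hp
    set q : Fin 2 → Fin k × ℚ := ![(c1, 0), (c0, 0)] with hq
    have hxy : x ≠ y := by
      intro h
      have := congrArg (fun v => (v 0).2) h
      norm_num [hx, hy] at this
    have hloc : ∀ a ∈ ({x, y} : Finset _), ∀ b ∈ ({x, y} : Finset _),
        (∀ i, (a i).1 = (b i).1 ∧ (a i).2 < (b i).2) → False := by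
      intro a ha b hb hab
      simp only [Finset.mem_insert, Finset.mem_singleton] at ha hb
      rcases ha with rfl | rfl <;> rcases hb with rfl | rfl <;>
        · have h1 := (hab 0).2
          have h2 := (hab 1).2
          simp only [hx, hy, Matrix.cons_val_zero, Matrix.cons_val_one, Matrix.head_cons] at h1 h2
          linarith
    obtain ⟨g, hg, hgA⟩ := h 2 {x, y} (fun v => if v = x then p else if v = y then q else v)
      (fun a ha b hb hab => absurd hab (fun hab => hloc a ha b hb hab))
    have hgx : g x = p := by simpa using hgA x (by simp)
    have hgy : g y = q := by
      have := hgA y (by simp)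
      simpa [hxy.symm] using this
    set z : Fin 2 → Fin k × ℚ := ![(c0, 2), (c0, 2)] with hz
    have hxz := hg x z (by intro i; fin_cases i <;> norm_num [hx, hz])
    have hyz := hg y z (by intro i; fin_cases i <;> norm_num [hy, hz])
    rw [hgx] at hxz
    rw [hgy] at hyz
    have e1 := (hxz 0).1
    have e2 := (hyz 0).1
    simp only [hp, hq, Matrix.cons_val_zero] at e1 e2
    exact h01 (e1.trans e2.symm)
end

section
/- For any k ≥ 1 and n ≥ 1, the n-th direct power of the disjoint union of k copies of the directed 3-cycle C₃ is isomorphic to a disjoint union of kⁿ·3^{n−1} copies of C₃. Consequently, every disjoint union of copies of C₃ is polymorphism homogeneous. -/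
/-- Shift every `ZMod 3` coordinate by `c`. -/
def shiftV (n : ℕ) (ι : Type) (c : ZMod 3) (x : Fin n → ι × ZMod 3) : Fin n → ι × ZMod 3 :=
  fun i => ((x i).1, (x i).2 + c)

lemma shiftV_shiftV (n : ℕ) (ι : Type) (c d : ZMod 3) (x : Fin n → ι × ZMod 3) :
    shiftV n ι c (shiftV n ι d x) = shiftV n ι (d + c) x := by
  funext i; simp [shiftV, add_assoc]

lemma shiftV_zero (n : ℕ) (ι : Type) (x : Fin n → ι × ZMod 3) : shiftV n ι 0 x = x := by
  funext i; simp [shiftV]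

lemma edge_iff (n : ℕ) (ι : Type) (x y : Fin n → ι × ZMod 3) :
    (∀ i, (x i).1 = (y i).1 ∧ (y i).2 = (x i).2 + 1) ↔ y = shiftV n ι 1 x := by
  constructor
  · intro h
    funext i
    exact Prod.ext (h i).1.symm (h i).2
  · rintro rfl i
    exact ⟨rfl, rfl⟩

theorem power_of_copies_of_C3 :
    (∀ k n : ℕ, 1 ≤ k → 1 ≤ n →
      ∃ φ : (Fin n → Fin k × ZMod 3) → (Fin (k ^ n * 3 ^ (n - 1)) × ZMod 3),
        Function.Bijective φ ∧
        ∀ p q : Fin n → Fin k × ZMod 3,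
          ((∀ i, (p i).1 = (q i).1 ∧ (q i).2 = (p i).2 + 1) ↔
            ((φ p).1 = (φ q).1 ∧ (φ q).2 = (φ p).2 + 1))) ∧
    (∀ (ι : Type) [Nonempty ι],
      IsPH (fun p q : ι × ZMod 3 => p.1 = q.1 ∧ q.2 = p.2 + 1)) := by
  constructor
  · -- Part 1: the power is a disjoint union of 3-cycles
    intro k n hk hn
    obtain ⟨m, rfl⟩ : ∃ m, n = m + 1 := ⟨n - 1, (Nat.succ_pred_eq_of_pos hn).symm⟩
    have hcard : Fintype.card ((Fin (m + 1) → Fin k) × (Fin m → ZMod 3))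
        = k ^ (m + 1) * 3 ^ (m + 1 - 1) := by
      simp
    let e := Fintype.equivFinOfCardEq hcard
    refine ⟨fun p => (e (fun i => (p i).1, fun j => (p j.succ).2 - (p 0).2), (p 0).2), ?_, ?_⟩
    · -- bijectivity via an explicit inverse
      have : Function.LeftInverse
          (fun xz : Fin (k ^ (m+1) * 3 ^ (m+1-1)) × ZMod 3 =>
            (fun i => ((e.symm xz.1).1 i,
              xz.2 + Fin.cases 0 (e.symm xz.1).2 i) : Fin (m+1) → Fin k × ZMod 3))
          (fun p => (e (fun i => (p i).1, fun j => (p j.succ).2 - (p 0).2), (p 0).2)) ∧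
          Function.RightInverse
          (fun xz : Fin (k ^ (m+1) * 3 ^ (m+1-1)) × ZMod 3 =>
            (fun i => ((e.symm xz.1).1 i,
              xz.2 + Fin.cases 0 (e.symm xz.1).2 i) : Fin (m+1) → Fin k × ZMod 3))
          (fun p => (e (fun i => (p i).1, fun j => (p j.succ).2 - (p 0).2), (p 0).2)) := by
        constructor
        · intro p
          simp only [Equiv.symm_apply_apply]
          funext i
          refine Fin.cases ?_ ?_ i
          · simp
          · intro j
            simp
        · intro xz
          simp only
          refine Prod.ext ?_ ?_
          · simp only
            have : (fun i => ((fun i => ((e.symm xz.1).1 i,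
                xz.2 + Fin.cases 0 (e.symm xz.1).2 i)) i : Fin k × ZMod 3).1,
                fun j : Fin m => (((fun i => ((e.symm xz.1).1 i,
                xz.2 + Fin.cases 0 (e.symm xz.1).2 i)) j.succ : Fin k × ZMod 3)).2
                - (((fun i => ((e.symm xz.1).1 i,
                xz.2 + Fin.cases 0 (e.symm xz.1).2 i)) 0 : Fin k × ZMod 3)).2)
                = e.symm xz.1 := by
              refine Prod.ext ?_ ?_
              · funext i; simp
              · funext j; simp
            rw [this, Equiv.apply_symm_apply]
          · simp
      exact ⟨this.1.injective, this.2.surjective⟩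
    · -- edge correspondence
      intro p q
      constructor
      · intro h
        have hpair : ((fun i => (p i).1, fun j => (p j.succ).2 - (p 0).2) :
            (Fin (m + 1) → Fin k) × (Fin m → ZMod 3))
            = (fun i => (q i).1, fun j => (q j.succ).2 - (q 0).2) := by
          refine Prod.ext ?_ ?_
          · funext i; exact (h i).1
          · funext j
            simp only
            rw [(h j.succ).2, (h 0).2]
            ring
        exact ⟨congrArg e hpair, (h 0).2⟩
      · rintro ⟨h1, h2⟩
        have h1' := e.injective h1
        have hfst : (fun i => (p i).1) = fun i => (q i).1 := congrArg Prod.fst h1'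
        have hsnd : (fun j : Fin m => (p j.succ).2 - (p 0).2)
            = fun j => (q j.succ).2 - (q 0).2 := congrArg Prod.snd h1'
        intro i
        refine ⟨congrFun hfst i, ?_⟩
        refine Fin.cases ?_ ?_ i
        · exact h2
        · intro j
          have := congrFun hsnd j
          simp only at this h2
          linear_combination h2 - this
  · -- Part 2: polymorphism homogeneity
    intro ι _ n A f hf
    classical
    -- key consistency lemma
    have key : ∀ a ∈ A, ∀ d : ZMod 3, shiftV n ι d a ∈ A →
        f (shiftV n ι d a) = shiftV n ι d (f a) := by
      intro a ha d hda
      have hd : d = 0 ∨ d = 1 ∨ d = 2 := by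
        have : ∀ e : ZMod 3, e = 0 ∨ e = 1 ∨ e = 2 := by decide
        exact this d
      rcases hd with rfl | rfl | rfl
      · rw [shiftV_zero, shiftV_zero]
      · have : ∀ i, (a i).1 = ((shiftV n ι 1 a) i).1 ∧
            ((shiftV n ι 1 a) i).2 = (a i).2 + 1 := (edge_iff n ι a _).2 rfl
        have h2 := hf a ha _ hda this
        exact (edge_iff n ι (f a) _).1 h2
      · have hrel : a = shiftV n ι 1 (shiftV n ι 2 a) := by
          rw [shiftV_shiftV]; exact (shiftV_zero n ι a).symm
        have : ∀ i, ((shiftV n ι 2 a) i).1 = (a i).1 ∧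
            (a i).2 = ((shiftV n ι 2 a) i).2 + 1 := by
          rw [edge_iff]; exact hrel
        have h2 := hf _ hda a ha this
        have h3 := (edge_iff n ι (f (shiftV n ι 2 a)) (f a)).1 h2
        rw [h3, shiftV_shiftV]; exact (shiftV_zero n ι (f (shiftV n ι 2 a))).symm
    set g : (Fin n → ι × ZMod 3) → (Fin n → ι × ZMod 3) := fun x =>
      if h : ∃ c : ZMod 3, shiftV n ι c x ∈ A then
        shiftV n ι (-(h.choose)) (f (shiftV n ι h.choose x)) else x with hg
    refine ⟨g, ?_, ?_⟩
    · -- g is a homomorphism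
      intro x y hxy
      have hy : y = shiftV n ι 1 x := (edge_iff n ι x y).1 hxy
      subst hy
      by_cases h1 : ∃ c : ZMod 3, shiftV n ι c x ∈ A
      · have h2 : ∃ c : ZMod 3, shiftV n ι c (shiftV n ι 1 x) ∈ A := by
          obtain ⟨c, hc⟩ := h1
          exact ⟨c - 1, by rw [shiftV_shiftV]; simpa using hc⟩
        refine (edge_iff n ι (g x) (g (shiftV n ι 1 x))).2 ?_
        rw [hg]
        simp only [dif_pos h1, dif_pos h2]
        set c := h1.choose with hc
        set c' := h2.choose with hc'
        have hcA : shiftV n ι c x ∈ A := h1.choose_spec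
        have hc'A : shiftV n ι (1 + c') x ∈ A := by
          have := h2.choose_spec
          rwa [shiftV_shiftV] at this
        -- shiftV n ι (1+c') x = shiftV n ι (1+c'-c) (shiftV n ι c x)
        have hrw : shiftV n ι (1 + c') x = shiftV n ι (1 + c' - c) (shiftV n ι c x) := by
          rw [shiftV_shiftV]; congr 1; ring
        have hk2 := key _ hcA (1 + c' - c) (by rw [← hrw]; exact hc'A)
        rw [← hrw] at hk2
        have : f (shiftV n ι c' (shiftV n ι 1 x)) = f (shiftV n ι (1 + c') x) := by
          rw [shiftV_shiftV]
        rw [this, hk2, shiftV_shiftV, shiftV_shiftV]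
        congr 1
        ring
      · have h2 : ¬ ∃ c : ZMod 3, shiftV n ι c (shiftV n ι 1 x) ∈ A := by
          rintro ⟨c, hc⟩
          rw [shiftV_shiftV] at hc
          exact h1 ⟨1 + c, hc⟩
        rw [hg]
        simp only [dif_neg h1, dif_neg h2]
        exact hxy
    · -- g agrees with f on A
      intro x hx
      have h1 : ∃ c : ZMod 3, shiftV n ι c x ∈ A := ⟨0, by rwa [shiftV_zero]⟩
      rw [hg]
      simp only [dif_pos h1]
      set c := h1.choose with hc
      have hcA : shiftV n ι c x ∈ A := h1.choose_spec
      have hk2 := key _ hcA (-c) (by rw [shiftV_shiftV]; simp [shiftV_zero, hx])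
      rw [shiftV_shiftV] at hk2
      simp only [add_neg_cancel, shiftV_zero] at hk2
      exact hk2.symm
end

section
/- Let f be a surjection onto the vertex set of the directed 3-cycle C₃. Then the oriented graph C₃[f] is homomorphism homogeneous if and only if f is a bijection. -/
theorem C3_blowup_HH_iff {S : Type*} [Countable S]
    (f : S → ZMod 3) (hf : Function.Surjective f) :
    IsHH (fun s t : S => f t = f s + 1) ↔ Function.Bijective f := by
  classical
  constructor
  · intro hHH
    refine ⟨?_, hf⟩
    intro s0 s1 hss
    by_contra hne
    obtain ⟨t, ht⟩ := hf (f s0 + 1)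
    obtain ⟨u, hu⟩ := hf (f s0 + 2)
    set h : S → S := fun x => if x = s1 then t else x with hh
    have hloc : IsLocHom (fun s t : S => f t = f s + 1) {s0, s1} h := by
      intro x hx y hy hxy
      have hx' : f x = f s0 := by
        rcases Finset.mem_insert.mp hx with h1 | h1
        · rw [h1]
        · rw [Finset.mem_singleton.mp h1, ← hss]
      have hy' : f y = f s0 := by
        rcases Finset.mem_insert.mp hy with h1 | h1
        · rw [h1]
        · rw [Finset.mem_singleton.mp h1, ← hss]
      rw [hx', hy'] at hxy
      exact absurd hxy (by simp)
    obtain ⟨g, hg, hga⟩ := hHH {s0, s1} h hloc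
    have h0 : g s0 = s0 := by
      have := hga s0 (by simp)
      simpa [hh, hne] using this
    have h1 : g s1 = t := by
      have := hga s1 (by simp)
      simpa [hh] using this
    have e0 : f (g s0) = f (g u) + 1 := by
      apply hg
      show f s0 = f u + 1
      rw [hu]
      have : (2 : ZMod 3) + 1 = 0 := by decide
      rw [add_assoc, this, add_zero]
    have e1 : f (g s1) = f (g u) + 1 := by
      apply hg
      show f s1 = f u + 1
      rw [hu, ← hss]
      have : (2 : ZMod 3) + 1 = 0 := by decide
      rw [add_assoc, this, add_zero]
    rw [h0] at e0
    rw [h1, ht] at e1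
    have : f s0 + 1 = f s0 := by rw [e1, ← e0]
    simp at this
  · intro hbij
    intro A h hloc
    rcases A.eq_empty_or_nonempty with rfl | ⟨a, ha⟩
    · exact ⟨id, fun x y e => e, by simp⟩
    · set e := Equiv.ofBijective f hbij with he
      set c : ZMod 3 := f (h a) - f a with hc
      refine ⟨fun x => e.symm (f x + c), ?_, ?_⟩
      · intro x y hxy
        show f (e.symm (f y + c)) = f (e.symm (f x + c)) + 1
        have hse : ∀ z, f (e.symm z) = z := fun z => e.apply_symm_apply z
        rw [hse, hse, hxy]
        ring
      · intro x hx
        have key : f (h x) = f x + c := by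
          have htri : ∀ d : ZMod 3, d = 0 ∨ d = 1 ∨ d = 2 := by decide
          rcases htri (f x - f a) with hd | hd | hd
          · have hfa : f x = f a := by
              have := sub_eq_zero.mp hd; exact this
            have : x = a := hbij.1 hfa
            rw [this, hc]; ring
          · -- f x = f a + 1 : edge a → x
            have hedge : f x = f a + 1 := by linear_combination hd
            have hax : f (h x) = f (h a) + 1 := hloc a ha x hx hedge
            rw [hc]
            linear_combination hax - hedge
          · -- f a = f x + 1 : edge x → a
            have hedge : f a = f x + 1 := by
              have : (2 : ZMod 3) = -1 := by decide
              rw [this] at hd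
              linear_combination -hd
            have hax : f (h a) = f (h x) + 1 := hloc x hx a ha hedge
            rw [hc]
            linear_combination hedge - hax
        show e.symm (f x + c) = h x
        rw [← key]
        exact e.symm_apply_apply (h x)
end
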